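/- Let β > 0, I = [−β/2, β/2], and let ℙ be any probability measure on E^I (product σ-algebra) satisfying ∫ f₁(x(t₁))⋯fₙ(x(tₙ)) dℙ(x) = 𝒮_{f₁,…,fₙ}(t₁,…,tₙ) for all n ≥ 1, (t₁,…,tₙ) ∈ I^n_≤ and fᵢ ∈ C(E,ℂ). Suppose the family satisfies the symmetry condition: the complex conjugate of 𝒮_{f̄ₙ,…,f̄₁}(−tₙ,…,−t₁) equals 𝒮_{f₁,…,fₙ}(t₁,…,tₙ) for all n, all (t₁,…,tₙ) ∈ I^n_≤ and all fᵢ ∈ C(E,ℂ), where f̄ denotes the complex conjugate function. Then the pushforward of ℙ under the time-reversal map Φ : E^I → E^I, Φ(x)(t) := x(−t), equals ℙ. -/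

import Mathlib

/-!
Both `ℙ` and its time reversal are determined by their finite-dimensional marginals. At increasing
times `t₁ ≤ ⋯ ≤ tₙ`, a moment of the reversed process is the moment of `ℙ` at the increasing times
`-tₙ ≤ ⋯ ≤ -t₁` with the test functions listed in reverse order. By the symmetry condition, and
since `conj ∫ g = ∫ conj g`, it equals the moment of `ℙ` at `t`. On the finite product `E^J`, with
`E` compact, the products `∏ⱼ fⱼ(yⱼ)` span a star subalgebra of `C(E^J, ℂ)` that separates points.
By Stone–Weierstrass this subalgebra is dense, so these moments determine the marginals.
-/

open MeasureTheory ComplexConjugate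

theorem StarAlgebra.adjoin_toSubmodule_eq_span {R A : Type*} [CommSemiring R] [StarRing R]
    [Semiring A] [Algebra R A] [StarRing A] [StarModule R A] {s : Submonoid A}
    (hs : star (s : Set A) ⊆ s) :
    Subalgebra.toSubmodule (adjoin R (s : Set A)).toSubalgebra = Submodule.span R s := by
  rw [adjoin_eq_span, Set.union_eq_self_of_subset_right hs, Submonoid.closure_eq]

namespace ContinuousMap

section Integral

variable {X 𝕜 : Type*} [TopologicalSpace X] [CompactSpace X] [MeasurableSpace X]
  [OpensMeasurableSpace X] [RCLike 𝕜] (μ : Measure X) [IsFiniteMeasure μ]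

theorem integrable (g : C(X, 𝕜)) : Integrable g μ :=
  (BoundedContinuousFunction.mkOfCompact g).integrable μ

noncomputable def integralCLM : C(X, 𝕜) →L[𝕜] 𝕜 :=
  LinearMap.mkContinuous
    { toFun g := ∫ x, g x ∂μ
      map_add' g h := integral_add (g.integrable μ) (h.integrable μ)
      map_smul' c g := integral_smul c g }
    (μ.real Set.univ) fun g => by
      simpa using (BoundedContinuousFunction.mkOfCompact g).norm_integral_le_mul_norm μ

@[simp]
theorem integralCLM_apply (g : C(X, 𝕜)) : integralCLM μ g = ∫ x, g x ∂μ := rfl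

end Integral

section PiProd

variable {ι X M : Type*} [Fintype ι] [TopologicalSpace X] [CommMonoid M] [TopologicalSpace M]
  [ContinuousMul M]

def piProd : (ι → C(X, M)) →* C(ι → X, M) where
  toFun f := ∏ i, (f i).comp (eval i)
  map_one' := by simp
  map_mul' f g := by simp [Finset.prod_mul_distrib]

@[simp]
theorem piProd_apply (f : ι → C(X, M)) (y : ι → X) : piProd f y = ∏ i, f i (y i) := by
  simp [piProd]

theorem piProd_mulSingle_apply [DecidableEq ι] (i : ι) (g : C(X, M)) (y : ι → X) :
    piProd (Pi.mulSingle i g) y = g (y i) := by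
  rw [piProd_apply, Fintype.prod_eq_single i fun j hj => by simp [hj], Pi.mulSingle_eq_same]

theorem star_piProd [StarMul M] [ContinuousStar M] (f : ι → C(X, M)) :
    star (piProd f) = piProd (star f) := by
  ext y
  simp [star_prod]

theorem star_mrange_piProd_subset [StarMul M] [ContinuousStar M] :
    star (MonoidHom.mrange (piProd : (ι → C(X, M)) →* C(ι → X, M)) : Set C(ι → X, M)) ⊆
      (MonoidHom.mrange (piProd : (ι → C(X, M)) →* C(ι → X, M)) : Set C(ι → X, M)) := by
  rintro _ ⟨f, hf⟩
  exact ⟨star f, by rw [← star_piProd, hf, star_star]⟩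

end PiProd

section SeparatesPoints

variable {ι X 𝕜 : Type*} [Fintype ι] [TopologicalSpace X] [RCLike 𝕜]

theorem separatesPoints_adjoin_mrange_piProd [T35Space X] :
    (StarAlgebra.adjoin 𝕜 (MonoidHom.mrange (piProd : (ι → C(X, 𝕜)) →* C(ι → X, 𝕜)) :
      Set C(ι → X, 𝕜))).SeparatesPoints := by
  classical
  intro y y' hyy'
  obtain ⟨i, hi⟩ := Function.ne_iff.mp hyy'
  obtain ⟨f, hf, hfi⟩ := separatesPoints_continuous_of_t35Space hi
  let g : C(X, 𝕜) := ⟨fun x => (f x : 𝕜), RCLike.continuous_ofReal.comp hf⟩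
  refine ⟨_, ⟨piProd (Pi.mulSingle i g), StarAlgebra.subset_adjoin _ _ ⟨_, rfl⟩, rfl⟩, ?_⟩
  change piProd _ y ≠ piProd _ y'
  rw [piProd_mulSingle_apply, piProd_mulSingle_apply]
  simpa [g] using hfi

end SeparatesPoints

end ContinuousMap

open ContinuousMap

namespace MeasureTheory

variable {X 𝕜 : Type*} [TopologicalSpace X] [MeasurableSpace X] [RCLike 𝕜]

theorem ext_of_forall_mem_subalgebra_integral_eq_of_compact [CompactSpace X]
    [HasOuterApproxClosed X] [BorelSpace X] {μ ν : Measure X} [IsFiniteMeasure μ]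
    [IsFiniteMeasure ν] {A : StarSubalgebra 𝕜 C(X, 𝕜)} (hA : A.SeparatesPoints)
    (heq : ∀ g ∈ A, ∫ x, g x ∂μ = ∫ x, g x ∂ν) : μ = ν := by
  have hdense : Dense (A : Set C(X, 𝕜)) := by
    rw [dense_iff_closure_eq, ← StarSubalgebra.topologicalClosure_coe,
      starSubalgebra_topologicalClosure_eq_top_of_separatesPoints A hA, StarSubalgebra.coe_top]
  have hint : ⇑(integralCLM μ) = integralCLM ν :=
    (integralCLM μ).continuous.ext_on hdense (integralCLM ν).continuous heq
  refine ext_of_forall_integral_eq_of_IsFiniteMeasure fun f => ?_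
  have := congrFun hint ⟨fun x => (f x : 𝕜), by fun_prop⟩
  simpa only [integralCLM_apply, coe_mk, integral_ofReal, RCLike.ofReal_inj] using this

theorem ext_of_forall_integral_prod_eq {ι : Type*} [Fintype ι] [T35Space X] [CompactSpace X]
    [SecondCountableTopology X] [BorelSpace X] {μ ν : Measure (ι → X)} [IsFiniteMeasure μ]
    [IsFiniteMeasure ν]
    (heq : ∀ f : ι → C(X, 𝕜), ∫ y, ∏ i, f i (y i) ∂μ = ∫ y, ∏ i, f i (y i) ∂ν) : μ = ν := by
  refine ext_of_forall_mem_subalgebra_integral_eq_of_compact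
    (separatesPoints_adjoin_mrange_piProd (𝕜 := 𝕜)) fun g hg => ?_
  have hspan := (StarAlgebra.adjoin_toSubmodule_eq_span star_mrange_piProd_subset).le hg
  refine LinearMap.eqOn_span' (f := (integralCLM μ).toLinearMap) (g := (integralCLM ν).toLinearMap)
    ?_ hspan
  rintro _ ⟨f, rfl⟩
  simpa using heq f

end MeasureTheory

section TimeReversal

variable {E : Type*} {I : Set ℝ}

def timeReversal (hI : ∀ r ∈ I, -r ∈ I) (x : I → E) : I → E :=
  fun b => x ⟨-b, hI b b.2⟩

theorem measurable_timeReversal [MeasurableSpace E] (hI : ∀ r ∈ I, -r ∈ I) :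
    Measurable (timeReversal (E := E) hI) :=
  measurable_pi_lambda _ fun _ => measurable_pi_apply _

variable [TopologicalSpace E] [MeasurableSpace E] {P : Measure (I → E)}
  {S : ∀ n : ℕ, (Fin n → C(E, ℂ)) → (Fin n → ℝ) → ℂ}

theorem integral_prod_timeReversal_of_monotone (hI : ∀ r ∈ I, -r ∈ I)
    (hPmom : ∀ n : ℕ, 1 ≤ n → ∀ t : Fin n → ℝ, ∀ ht : ∀ i, t i ∈ I, Monotone t →
      ∀ f : Fin n → C(E, ℂ), ∫ x, ∏ i, f i (x ⟨t i, ht i⟩) ∂P = S n f t)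
    (hsym : ∀ (n : ℕ) (t : Fin n → ℝ), (∀ i, t i ∈ I) → Monotone t →
      ∀ f : Fin n → C(E, ℂ),
        conj (S n (fun i => star (f i.rev)) (fun i => -(t i.rev))) = S n f t)
    {n : ℕ} (hn : 1 ≤ n) {t : Fin n → ℝ} (ht : ∀ i, t i ∈ I) (hmono : Monotone t)
    (f : Fin n → C(E, ℂ)) :
    ∫ x, ∏ i, f i (timeReversal hI x ⟨t i, ht i⟩) ∂P = ∫ x, ∏ i, f i (x ⟨t i, ht i⟩) ∂P := by
  have ht' : ∀ i : Fin n, -t i.rev ∈ I := fun i => hI _ (ht i.rev)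
  have hmono' : Monotone fun i : Fin n => -t i.rev := fun i j hij =>
    neg_le_neg (hmono (Fin.rev_le_rev.mpr hij))
  calc ∫ x, ∏ i, f i (timeReversal hI x ⟨t i, ht i⟩) ∂P
      = ∫ x, ∏ i : Fin n, f i.rev (x ⟨-t i.rev, ht' i⟩) ∂P := by
        congr 1 with x
        exact Fintype.prod_equiv Fin.revPerm _ _ fun i => by simp [timeReversal]
    _ = S n (fun i : Fin n => f i.rev) (fun i => -t i.rev) := hPmom n hn _ ht' hmono' _
    _ = conj (S n (fun i => star (f i)) t) := by rw [← hsym n _ ht' hmono']; simp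
    _ = conj (∫ x, ∏ i, star (f i) (x ⟨t i, ht i⟩) ∂P) := by rw [hPmom n hn t ht hmono]
    _ = ∫ x, ∏ i, f i (x ⟨t i, ht i⟩) ∂P := by rw [← integral_conj]; simp [map_prod]

theorem integral_prod_timeReversal (hI : ∀ r ∈ I, -r ∈ I)
    (hPmom : ∀ n : ℕ, 1 ≤ n → ∀ t : Fin n → ℝ, ∀ ht : ∀ i, t i ∈ I, Monotone t →
      ∀ f : Fin n → C(E, ℂ), ∫ x, ∏ i, f i (x ⟨t i, ht i⟩) ∂P = S n f t)
    (hsym : ∀ (n : ℕ) (t : Fin n → ℝ), (∀ i, t i ∈ I) → Monotone t →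
      ∀ f : Fin n → C(E, ℂ),
        conj (S n (fun i => star (f i.rev)) (fun i => -(t i.rev))) = S n f t)
    (J : Finset I) (f : J → C(E, ℂ)) :
    ∫ x, ∏ j, f j (timeReversal hI x j) ∂P = ∫ x, ∏ j, f j (x j) ∂P := by
  obtain hJ | hJ := Nat.eq_zero_or_pos J.card
  · obtain rfl := Finset.card_eq_zero.mp hJ
    simp
  let e := J.orderIsoOfFin rfl
  have reindex (g : J → ℂ) : ∏ j, g j = ∏ k, g (e k) := (e.toEquiv.prod_comp g).symm
  simp_rw [reindex]
  exact integral_prod_timeReversal_of_monotone hI hPmom hsym hJ (fun k => (e k : I).2)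
    (fun _ _ hab => e.monotone hab) (fun k => f (e k))

end TimeReversal

theorem stmt_5_general
    (E : Type) [TopologicalSpace E] [CompactSpace E] [T2Space E]
    [SecondCountableTopology E] [MeasurableSpace E] [BorelSpace E]
    (β : ℝ)
    (I : Set ℝ) (hIdef : I = Set.Icc (-(β / 2)) (β / 2))
    (S : ∀ n : ℕ, (Fin n → C(E, ℂ)) → (Fin n → ℝ) → ℂ)
    (P : Measure (I → E)) (hP : IsProbabilityMeasure P)
    (hPmom : ∀ n : ℕ, 1 ≤ n → ∀ t : Fin n → ℝ, ∀ ht : ∀ i, t i ∈ I, Monotone t →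
      ∀ f : Fin n → C(E, ℂ),
        ∫ x, ∏ i, f i (x ⟨t i, ht i⟩) ∂P = S n f t)
    (hsym : ∀ (n : ℕ) (t : Fin n → ℝ), (∀ i, t i ∈ I) → Monotone t →
      ∀ f : Fin n → C(E, ℂ),
        conj (S n (fun i => star (f i.rev)) (fun i => -(t i.rev))) = S n f t) :
    ∀ Φ : (I → E) → (I → E),
      (∀ (x : I → E) (a b : I), (a : ℝ) = -(b : ℝ) → Φ x b = x a) →
      Measure.map Φ P = P := by
  intro Φ hΦ
  have hI : ∀ r ∈ I, -r ∈ I := by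
    subst hIdef
    exact fun r hr => ⟨neg_le_neg hr.2, by linarith [hr.1]⟩
  obtain rfl : Φ = timeReversal hI := funext fun x => funext fun b => hΦ x _ b rfl
  refine IsProjectiveLimit.unique (P := fun J => P.map J.restrict) (fun J => ?_) fun J => rfl
  rw [Measure.map_map (Finset.measurable_restrict J) (measurable_timeReversal hI)]
  refine ext_of_forall_integral_prod_eq (𝕜 := ℂ) fun f => ?_
  have hcont : Continuous fun y : J → E => ∏ j, f j (y j) := by fun_prop
  rw [integral_map (J.measurable_restrict.comp (measurable_timeReversal hI)).aemeasurable
      hcont.aestronglyMeasurable,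
    integral_map J.measurable_restrict.aemeasurable hcont.aestronglyMeasurable]
  exact integral_prod_timeReversal hI hPmom hsym J f

/-- **symmetry / time reversal.** Let `β > 0`, `I = [−β/2, β/2]`, and let
`ℙ` be a probability measure on `E^I` whose moments along nondecreasing tuples of times
are given by the moment family `𝒮`.  If the family satisfies the symmetry condition
`conj 𝒮_{f̄ₙ,…,f̄₁}(−tₙ,…,−t₁) = 𝒮_{f₁,…,fₙ}(t₁,…,tₙ)`, then the pushforward of `ℙ`
under the time-reversal map `Φ(x)(t) = x(−t)` equals `ℙ`. -/
theorem stmt_5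
    (E : Type) [TopologicalSpace E] [CompactSpace E] [T2Space E]
    [SecondCountableTopology E] [MeasurableSpace E] [BorelSpace E]
    (β : ℝ) (hβ : 0 < β)
    (I : Set ℝ) (hIdef : I = Set.Icc (-(β / 2)) (β / 2))
    (S : ∀ n : ℕ, (Fin n → C(E, ℂ)) → (Fin n → ℝ) → ℂ)
    (hScont : ∀ (n : ℕ) (f : Fin n → C(E, ℂ)),
      ContinuousOn (S n f) {t : Fin n → ℝ | (∀ i, t i ∈ I) ∧ Monotone t})
    (hSlin : ∀ (n : ℕ) (t : Fin n → ℝ), (∀ i, t i ∈ I) → Monotone t →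
      ∀ (f : Fin n → C(E, ℂ)) (i : Fin n) (c : ℂ) (g h : C(E, ℂ)),
        S n (Function.update f i (c • g + h)) t
          = c * S n (Function.update f i g) t + S n (Function.update f i h) t)
    (hSbdd : ∀ (n : ℕ) (t : Fin n → ℝ), (∀ i, t i ∈ I) → Monotone t →
      ∃ C > 0, ∀ f : Fin n → C(E, ℂ), ‖S n f t‖ ≤ C * ∏ i, ‖f i‖)
    (hScons : ∀ (n : ℕ) (t : Fin (n + 1) → ℝ), (∀ i, t i ∈ I) → Monotone t →
      ∀ (f : Fin (n + 1) → C(E, ℂ)) (i : Fin (n + 1)), f i = 1 →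
        S (n + 1) f t = S n (f ∘ i.succAbove) (t ∘ i.succAbove))
    (hSnorm : ∀ t : Fin 1 → ℝ, (∀ i, t i ∈ I) → S 1 (fun _ => 1) t = 1)
    (hSpos : ∀ (n : ℕ) (t : Fin n → ℝ), (∀ i, t i ∈ I) → Monotone t →
      ∀ f : Fin n → C(E, ℂ), (∀ i x, (f i x).im = 0 ∧ 0 ≤ (f i x).re) →
        0 ≤ (S n f t).re ∧ (S n f t).im = 0)
    (P : Measure (I → E)) (hP : IsProbabilityMeasure P)
    (hPmom : ∀ n : ℕ, 1 ≤ n → ∀ t : Fin n → ℝ, ∀ ht : ∀ i, t i ∈ I, Monotone t →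
      ∀ f : Fin n → C(E, ℂ),
        ∫ x, ∏ i, f i (x ⟨t i, ht i⟩) ∂P = S n f t)
    (hsym : ∀ (n : ℕ) (t : Fin n → ℝ), (∀ i, t i ∈ I) → Monotone t →
      ∀ f : Fin n → C(E, ℂ),
        conj (S n (fun i => star (f i.rev)) (fun i => -(t i.rev))) = S n f t) :
    ∀ Φ : (I → E) → (I → E),
      (∀ (x : I → E) (a b : I), (a : ℝ) = -(b : ℝ) → Φ x b = x a) →
      Measure.map Φ P = P :=
  stmt_5_general E β I hIdef S P hP hPmom hsym
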